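/- arXiv:2309.09542 — 2 statements merged into one kernel-verified Lean document; each statement's English description precedes it below -/
import Mathlib

section
/- Let P be a program with deterministic small-step semantics and S a standard security context for P, and suppose every maximal trace of P is finite (all runs terminate). Then P and S satisfy termination-insensitive trace confidentiality if and only if the Kripke interpretation of P and S satisfies confidentiality, i.e., for all agents A, worlds w, and temporally sound formulae φ: w ⊨ ◇[K^C_A]φ implies w ⊨ [K^P_A]◇φ. -/
/-!
Security properties through the lens of modal logic: Kripke interpretations
of deterministic programs with a standard security context.

A program is given by its text, a domain of values for each variable, and a
deterministic small-step semantics, modelled as a partial function `step` on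
configurations (`none` meaning that the configuration admits no further step).
Worlds of the Kripke interpretation are the finite traces from valid initial
stores; by determinism such a trace is represented by its initial store
together with its length.
-/

attribute [local instance] Classical.propDecidable

namespace SecModal

/-- The usual box modality for a relation `R`: `φ` holds at all `R`-successors. -/
def box {W : Type} (R : W → W → Prop) (φ : W → Prop) (w : W) : Prop :=
  ∀ w', R w w' → φ w'

/-- The usual diamond modality for a relation `R`: `φ` holds at some `R`-successor. -/
def dia {W : Type} (R : W → W → Prop) (φ : W → Prop) (w : W) : Prop :=
  ∃ w', R w w' ∧ φ w'

/-- Temporal soundness of a formula `φ` with respect to a time relation `T`: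
at every world, `φ` holds iff `□φ` holds. -/
def TS {W : Type} (T : W → W → Prop) (φ : W → Prop) : Prop :=
  ∀ w, φ w ↔ box T φ w

/-- A store assigns a value to each variable. -/
abbrev Store (Var Val : Type) : Type := Var → Val

/-- A configuration pairs a program text with a store. -/
abbrev Config (Prog Var Val : Type) : Type := Prog × Store Var Val

/-- Restriction of a store to a set of variables `S` (`none` outside `S`). -/
noncomputable def restrict {Var Val : Type} (S : Set Var) (σ : Store Var Val) : Var → Option Val :=
  fun v => if v ∈ S then some (σ v) else none

/-- Destuttering: removal of consecutive duplicate entries of a list. -/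
noncomputable def dest {α : Type} (l : List α) : List α :=
  l.destutter (· ≠ ·)

/-- A program `⟨p, V, I⟩` with deterministic small-step semantics:
`text` is the program text `p`, `dom` assigns to each variable its domain of
values `I(v)`, and `step` is the deterministic small-step transition function. -/
structure Program (Prog Var Val : Type) : Type where
  text : Prog
  dom : Var → Set Val
  step : Config Prog Var Val → Option (Config Prog Var Val)

namespace Program

variable {Prog Var Val Agent : Type}

/-- `n`-fold iteration of the small-step semantics. -/
def iter (P : Program Prog Var Val) : ℕ → Config Prog Var Val → Option (Config Prog Var Val)
  | 0, c => some c
  | n + 1, c => (P.iter n c).bind P.step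

/-- The configuration reached after `k` steps from `c` (defaulting to `c` when undefined). -/
def configAt (P : Program Prog Var Val) (c : Config Prog Var Val) (k : ℕ) :
    Config Prog Var Val :=
  (P.iter k c).getD c

/-- The view, through the variables in `S`, of the trace of length `n` (i.e. with `n + 1`
configurations) starting at `c`: the destuttering of the list of restricted stores. -/
noncomputable def pview (P : Program Prog Var Val) (S : Set Var) (c : Config Prog Var Val)
    (n : ℕ) : List (Var → Option Val) :=
  dest ((List.range (n + 1)).map fun k => restrict S (P.configAt c k).2)

/-- The maximal trace generated from `c` halts. -/
def halts (P : Program Prog Var Val) (c : Config Prog Var Val) : Prop :=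
  ∃ n c', P.iter n c = some c' ∧ P.step c' = none

/-- The maximal trace generated from `c` diverges (is infinite). -/
def diverges (P : Program Prog Var Val) (c : Config Prog Var Val) : Prop :=
  ¬ P.halts c

/-- The (possibly infinite) views through `S` of the maximal traces generated from
`c₁` and `c₂` are equal: every view of a finite prefix of the one is a prefix of a view
of a finite prefix of the other, and vice versa. -/
def mviewEq (P : Program Prog Var Val) (S : Set Var) (c₁ c₂ : Config Prog Var Val) : Prop :=
  (∀ n, (P.iter n c₁).isSome = true →
    ∃ m, (P.iter m c₂).isSome = true ∧ P.pview S c₁ n <+: P.pview S c₂ m) ∧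
  (∀ n, (P.iter n c₂).isSome = true →
    ∃ m, (P.iter m c₁).isSome = true ∧ P.pview S c₂ n <+: P.pview S c₁ m)

/-- A valid initial store: every variable takes a value in its domain. -/
def ValidStore (P : Program Prog Var Val) (σ : Store Var Val) : Prop :=
  ∀ v, σ v ∈ P.dom v

/-- Worlds of the Kripke interpretation of `P`: the finite traces of `P`, represented
by a valid initial store together with a length for which the iterated step is defined
(the trace itself is recovered by determinism of the semantics). -/
structure World (P : Program Prog Var Val) : Type where
  init : Store Var Val
  valid : ∀ v, init v ∈ P.dom v
  len : ℕ
  defined : (P.iter len (P.text, init)).isSome = true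

/-- The store at time `k` along the trace `w`. -/
def World.store {P : Program Prog Var Val} (w : P.World) (k : ℕ) : Store Var Val :=
  (P.configAt (P.text, w.init) k).2

/-- The view of the world (finite trace) `w` through the set of variables `S`. -/
noncomputable def wview (P : Program Prog Var Val) (S : Set Var) (w : P.World) :
    List (Var → Option Val) :=
  P.pview S (P.text, w.init) w.len

/-- The time relation `T` of the Kripke interpretation: `w T w'` iff the trace `w`
is a (non-strict) prefix of the trace `w'`. -/
def Ttime (P : Program Prog Var Val) (w w' : P.World) : Prop :=
  w.init = w'.init ∧ w.len ≤ w'.len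

/-- The knowledge relation `K^C_A = K^P_A` of an agent with read set `RA`:
two worlds are related iff the agent's views of them coincide. -/
def Krel (P : Program Prog Var Val) (RA : Set Var) (w w' : P.World) : Prop :=
  P.wview RA w = P.wview RA w'

/-- The write-capability relation `W^C_A` of an agent with write set `WA`:
two worlds are related iff both are initial (length-1, i.e. 0 steps) traces and
their `fix`-projections (to the complement of `WA`) coincide. -/
def WCrel (P : Program Prog Var Val) (WA : Set Var) (w w' : P.World) : Prop :=
  w.len = 0 ∧ w'.len = 0 ∧ P.wview WAᶜ w = P.wview WAᶜ w'

/-- The write-permission relation `W^P_A` of an agent with write set `WA`: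
two worlds are related iff their `fix`-projections coincide. -/
def WPrel (P : Program Prog Var Val) (WA : Set Var) (w w' : P.World) : Prop :=
  P.wview WAᶜ w = P.wview WAᶜ w'

/-- The halting atom `↓`: the trace `w` has halted, i.e. its last configuration
admits no further step. -/
def halted (P : Program Prog Var Val) (w : P.World) : Prop :=
  P.step (P.configAt (P.text, w.init) w.len) = none

end Program

end SecModal

namespace SecModal

/-- Termination-insensitive trace confidentiality (Def. conf2). -/
def TITraceConf {Prog Var Val Agent : Type} (P : Program Prog Var Val)
    (Rd : Agent → Set Var) : Prop :=
  ∀ (A : Agent) (σ1 σ2 : Store Var Val),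
    P.ValidStore σ1 → P.ValidStore σ2 → (∀ v ∈ Rd A, σ1 v = σ2 v) →
    P.mviewEq (Rd A) (P.text, σ1) (P.text, σ2) ∨
      P.diverges (P.text, σ1) ∨ P.diverges (P.text, σ2)


/-! Once every run terminates, termination-insensitive trace confidentiality says that runs from
initial stores agreeing on `R(A)` have the same complete view. Given this, the view of any prefix
of one run is a prefix of the complete view of the other; since views grow by at most one entry
per step, it is the view of some prefix of the other run, where `φ` then holds, and temporal
soundness carries `φ` to the end of that run. Conversely, apply Kripke confidentiality at an
initial world to `φ u := "the complete view of the first run is a prefix of that of the run of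
u"`, which depends only on the run of `u` and is therefore temporally sound. -/

lemma _root_.List.destutter'_concat {α : Type*} (R : α → α → Prop) [DecidableRel R] (a b : α)
    (l : List α) :
    (l ++ [b]).destutter' R a = l.destutter' R a ∨
      (l ++ [b]).destutter' R a = l.destutter' R a ++ [b] := by
  induction l generalizing a with
  | nil => by_cases h : R a b <;> simp [h]
  | cons c l ih =>
    by_cases h : R a c
    · simp only [List.cons_append, List.destutter'_cons_pos _ h, List.cons_inj_right]
      exact ih c
    · simp only [List.cons_append, List.destutter'_cons_neg _ h]
      exact ih a

lemma _root_.List.destutter_concat {α : Type*} (R : α → α → Prop) [DecidableRel R] (b : α)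
    (l : List α) :
    (l ++ [b]).destutter R = l.destutter R ∨ (l ++ [b]).destutter R = l.destutter R ++ [b] := by
  cases l with
  | nil => simp
  | cons a l => simpa only [List.cons_append, List.destutter_cons'] using l.destutter'_concat R a b

lemma restrict_eq_restrict_iff {Var Val : Type} {S : Set Var} {σ₁ σ₂ : Store Var Val} :
    restrict S σ₁ = restrict S σ₂ ↔ ∀ v ∈ S, σ₁ v = σ₂ v := by
  refine ⟨fun h v hv => by simpa [restrict, hv] using congrFun h v, fun h => ?_⟩
  funext v
  by_cases hv : v ∈ S <;> simp [restrict, hv, h]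

namespace Program

variable {Prog Var Val : Type} (P : Program Prog Var Val)

section Views

variable (S : Set Var) (c : Config Prog Var Val)

lemma pview_zero : P.pview S c 0 = [restrict S c.2] := rfl

lemma pview_succ (n : ℕ) :
    P.pview S c (n + 1) = P.pview S c n ∨
      P.pview S c (n + 1) = P.pview S c n ++ [restrict S (P.configAt c (n + 1)).2] := by
  simp only [pview, dest, List.range_succ (n := n + 1), List.map_append, List.map_singleton]
  exact List.destutter_concat _ _ _

lemma pview_prefix_pview {m n : ℕ} (h : m ≤ n) : P.pview S c m <+: P.pview S c n := by
  induction n, h using Nat.le_induction with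
  | base => exact List.prefix_refl _
  | succ n _ ih =>
    rcases P.pview_succ S c n with h | h <;> rw [h]
    · exact ih
    · exact ih.trans (List.prefix_append _ _)

lemma head?_pview (n : ℕ) : (P.pview S c n).head? = some (restrict S c.2) := by
  obtain ⟨t, ht⟩ := P.pview_prefix_pview S c (Nat.zero_le n)
  rw [← ht, pview_zero]
  rfl

lemma pview_ne_nil (n : ℕ) : P.pview S c n ≠ [] := by
  simp [← List.head?_eq_none_iff, head?_pview]

lemma exists_pview_eq_of_prefix {l : List (Var → Option Val)} {N : ℕ}
    (hl : l <+: P.pview S c N) (hne : l ≠ []) : ∃ m ≤ N, P.pview S c m = l := by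
  induction N with
  | zero =>
    obtain ⟨x, t, rfl⟩ := List.exists_cons_of_ne_nil hne
    rw [pview_zero, List.cons_prefix_cons, List.prefix_nil] at hl
    exact ⟨0, le_rfl, by rw [pview_zero, hl.1, hl.2]⟩
  | succ N ih =>
    rcases P.pview_succ S c N with h | h <;> rw [h] at hl
    · obtain ⟨m, hm, hml⟩ := ih hl
      exact ⟨m, hm.trans N.le_succ, hml⟩
    · rcases List.prefix_concat_iff.mp hl with rfl | hl
      · exact ⟨N + 1, le_rfl, h⟩
      · obtain ⟨m, hm, hml⟩ := ih hl
        exact ⟨m, hm.trans N.le_succ, hml⟩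

end Views

lemma isSome_iter_of_le {c : Config Prog Var Val} {m n : ℕ} (hmn : m ≤ n)
    (h : (P.iter n c).isSome) : (P.iter m c).isSome := by
  induction n, hmn using Nat.le_induction with
  | base => exact h
  | succ n _ ih =>
    apply ih
    rw [iter] at h
    exact Option.isSome_of_isSome_bind h

def HaltsAt (c : Config Prog Var Val) (N : ℕ) : Prop :=
  ∃ d, P.iter N c = some d ∧ P.step d = none

namespace HaltsAt

variable {P} {c : Config Prog Var Val} {N : ℕ}

lemma isSome_iter (h : P.HaltsAt c N) : (P.iter N c).isSome := by
  obtain ⟨d, hd, -⟩ := h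
  simp [hd]

lemma le_of_isSome_iter (h : P.HaltsAt c N) {n : ℕ} (hn : (P.iter n c).isSome) : n ≤ N := by
  obtain ⟨d, hd, hstep⟩ := h
  by_contra! hlt
  have := P.isSome_iter_of_le hlt hn
  simp [iter, hd, hstep] at this

lemma pview_prefix (h : P.HaltsAt c N) (S : Set Var) {n : ℕ} (hn : (P.iter n c).isSome) :
    P.pview S c n <+: P.pview S c N :=
  P.pview_prefix_pview S c (h.le_of_isSome_iter hn)

end HaltsAt

lemma mviewEq_iff_of_haltsAt {S : Set Var} {c₁ c₂ : Config Prog Var Val} {N₁ N₂ : ℕ}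
    (h₁ : P.HaltsAt c₁ N₁) (h₂ : P.HaltsAt c₂ N₂) :
    P.mviewEq S c₁ c₂ ↔ P.pview S c₁ N₁ = P.pview S c₂ N₂ := by
  constructor
  · rintro ⟨h₁₂, h₂₁⟩
    obtain ⟨m₂, hm₂, hpre₁₂⟩ := h₁₂ N₁ h₁.isSome_iter
    obtain ⟨m₁, hm₁, hpre₂₁⟩ := h₂₁ N₂ h₂.isSome_iter
    exact (hpre₁₂.trans (h₂.pview_prefix S hm₂)).sublist.antisymm
      (hpre₂₁.trans (h₁.pview_prefix S hm₁)).sublist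
  · intro heq
    exact ⟨fun n hn => ⟨N₂, h₂.isSome_iter, heq ▸ h₁.pview_prefix S hn⟩,
      fun n hn => ⟨N₁, h₁.isSome_iter, heq ▸ h₂.pview_prefix S hn⟩⟩

lemma Krel.init_agree {S : Set Var} {w w' : P.World} (h : P.Krel S w w') :
    ∀ v ∈ S, w.init v = w'.init v := by
  have := congrArg List.head? h
  simp only [wview, head?_pview, Option.some.injEq] at this
  exact restrict_eq_restrict_iff.mp this

def initWorld (σ : Store Var Val) (hσ : P.ValidStore σ) : P.World := ⟨σ, hσ, 0, rfl⟩

lemma krel_initWorld_iff {S : Set Var} {σ₁ σ₂ : Store Var Val} (h₁ : P.ValidStore σ₁)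
    (h₂ : P.ValidStore σ₂) :
    P.Krel S (P.initWorld σ₁ h₁) (P.initWorld σ₂ h₂) ↔ ∀ v ∈ S, σ₁ v = σ₂ v := by
  simp only [Krel, wview, initWorld, pview_zero, List.cons.injEq, and_true]
  exact restrict_eq_restrict_iff

lemma TS_of_init (ψ : Store Var Val → Prop) : TS P.Ttime fun w => ψ w.init := by
  refine fun w => ⟨fun h w' hT => ?_, fun h => h w ⟨rfl, le_rfl⟩⟩
  change ψ w'.init
  rwa [← hT.1]

end Program

/-- Kripke confidentiality: `w ⊨ ◇[K^C_A]φ → w ⊨ [K^P_A]◇φ` for temporally sound `φ`. -/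
def KripkeConf {Prog Var Val Agent : Type} (P : Program Prog Var Val) (Rd : Agent → Set Var) :
    Prop :=
  ∀ (A : Agent) (w : P.World) (φ : P.World → Prop), TS P.Ttime φ →
    dia P.Ttime (box (P.Krel (Rd A)) φ) w → box (P.Krel (Rd A)) (dia P.Ttime φ) w

section Confidentiality

variable {Prog Var Val Agent : Type} {P : Program Prog Var Val} {Rd : Agent → Set Var}

lemma TITraceConf.pview_eq (hconf : TITraceConf P Rd) (A : Agent) {σ₁ σ₂ : Store Var Val}
    (h₁ : P.ValidStore σ₁) (h₂ : P.ValidStore σ₂) (hagree : ∀ v ∈ Rd A, σ₁ v = σ₂ v)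
    {N₁ N₂ : ℕ} (hN₁ : P.HaltsAt (P.text, σ₁) N₁) (hN₂ : P.HaltsAt (P.text, σ₂) N₂) :
    P.pview (Rd A) (P.text, σ₁) N₁ = P.pview (Rd A) (P.text, σ₂) N₂ := by
  rcases hconf A σ₁ σ₂ h₁ h₂ hagree with h | h | h
  · exact (P.mviewEq_iff_of_haltsAt hN₁ hN₂).mp h
  · exact absurd ⟨N₁, hN₁⟩ h
  · exact absurd ⟨N₂, hN₂⟩ h

lemma kripkeConf_of_titraceConf (hterm : ∀ σ, P.ValidStore σ → P.halts (P.text, σ))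
    (hconf : TITraceConf P Rd) : KripkeConf P Rd := by
  rintro A w φ hφ ⟨w', ⟨hinit, -⟩, hbox⟩ w₂ hK
  obtain ⟨N₁, hN₁⟩ : ∃ N, P.HaltsAt (P.text, w.init) N := hterm w.init w.valid
  obtain ⟨N₂, hN₂⟩ : ∃ N, P.HaltsAt (P.text, w₂.init) N := hterm w₂.init w₂.valid
  have hmax := hconf.pview_eq A w.valid w₂.valid hK.init_agree hN₁ hN₂
  have hpre : P.wview (Rd A) w' <+: P.pview (Rd A) (P.text, w₂.init) N₂ :=
    hmax ▸ hinit ▸ hN₁.pview_prefix (Rd A) (hinit ▸ w'.defined)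
  obtain ⟨m, hmN₂, hm⟩ := P.exists_pview_eq_of_prefix _ _ hpre (P.pview_ne_nil _ _ _)
  let w₂m : P.World := ⟨w₂.init, w₂.valid, m, P.isSome_iter_of_le hmN₂ hN₂.isSome_iter⟩
  let w₂N : P.World := ⟨w₂.init, w₂.valid, N₂, hN₂.isSome_iter⟩
  have hφm : φ w₂m := hbox w₂m hm.symm
  exact ⟨w₂N, ⟨rfl, hN₂.le_of_isSome_iter w₂.defined⟩, (hφ w₂m).mp hφm w₂N ⟨rfl, hmN₂⟩⟩

lemma KripkeConf.pview_prefix (hk : KripkeConf P Rd) (A : Agent) {σ₁ σ₂ : Store Var Val}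
    (h₁ : P.ValidStore σ₁) (h₂ : P.ValidStore σ₂) (hagree : ∀ v ∈ Rd A, σ₁ v = σ₂ v)
    {N₁ N₂ : ℕ} (hN₁ : P.HaltsAt (P.text, σ₁) N₁) (hN₂ : P.HaltsAt (P.text, σ₂) N₂) :
    P.pview (Rd A) (P.text, σ₁) N₁ <+: P.pview (Rd A) (P.text, σ₂) N₂ := by
  let ψ : Store Var Val → Prop := fun σ => ∀ M, P.HaltsAt (P.text, σ) M →
    P.pview (Rd A) (P.text, σ₁) N₁ <+: P.pview (Rd A) (P.text, σ) M
  have hdia : dia P.Ttime (box (P.Krel (Rd A)) fun u => ψ u.init) (P.initWorld σ₁ h₁) := by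
    refine ⟨⟨σ₁, h₁, N₁, hN₁.isSome_iter⟩, ⟨rfl, Nat.zero_le _⟩, fun u hu M hM => ?_⟩
    simp only [Program.Krel, Program.wview] at hu
    exact hu ▸ hM.pview_prefix (Rd A) u.defined
  obtain ⟨w', ⟨hinit, -⟩, hφ'⟩ := hk A _ _ (P.TS_of_init ψ) hdia (P.initWorld σ₂ h₂)
    ((P.krel_initWorld_iff h₁ h₂).mpr hagree)
  rw [show w'.init = σ₂ from hinit.symm] at hφ'
  exact hφ' N₂ hN₂

lemma titraceConf_of_kripkeConf (hterm : ∀ σ, P.ValidStore σ → P.halts (P.text, σ))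
    (hk : KripkeConf P Rd) : TITraceConf P Rd := by
  intro A σ₁ σ₂ h₁ h₂ hagree
  obtain ⟨N₁, hN₁⟩ : ∃ N, P.HaltsAt (P.text, σ₁) N := hterm σ₁ h₁
  obtain ⟨N₂, hN₂⟩ : ∃ N, P.HaltsAt (P.text, σ₂) N := hterm σ₂ h₂
  have h₁₂ := hk.pview_prefix A h₁ h₂ hagree hN₁ hN₂
  have h₂₁ := hk.pview_prefix A h₂ h₁ (fun v hv => (hagree v hv).symm) hN₂ hN₁
  exact Or.inl <| (P.mviewEq_iff_of_haltsAt hN₁ hN₂).mpr (h₁₂.sublist.antisymm h₂₁.sublist)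

end Confidentiality

/-- If every maximal trace of `P` is finite (all runs terminate), then
`P` and `S` satisfy termination-insensitive trace confidentiality iff the Kripke
interpretation of `P` and `S` satisfies (termination-sensitive) confidentiality:
for all agents `A`, worlds `w`, and temporally sound `φ`, `w ⊨ ◇[K^C_A]φ` implies
`w ⊨ [K^P_A]◇φ`. -/
theorem stmt_5 {Prog Var Val Agent : Type} (P : Program Prog Var Val)
    (Rd : Agent → Set Var)
    (hterm : ∀ σ : Store Var Val, P.ValidStore σ → P.halts (P.text, σ)) :
    TITraceConf P Rd ↔
      (∀ (A : Agent) (w : P.World) (φ : P.World → Prop), TS P.Ttime φ →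
        dia P.Ttime (box (P.Krel (Rd A)) φ) w →
        box (P.Krel (Rd A)) (dia P.Ttime φ) w) :=
  ⟨kripkeConf_of_titraceConf hterm, titraceConf_of_kripkeConf hterm⟩

end SecModal
end

section
/- Let P be a program with deterministic small-step semantics and S a standard security context for P. Then P and S satisfy termination-insensitive trace-based integrity if and only if the Kripke interpretation of P and S satisfies cause termination-insensitive integrity, i.e., for all agents A, all worlds w, and all temporally sound formulae φ: w ⊨ ◇↓ ∧ ◇[W^P_A]φ implies w ⊨ [W^C_A](□¬↓ ∨ ◇φ). -/
/-!
Security properties through the lens of modal logic: Kripke interpretations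
of deterministic programs with a standard security context.

A program is given by its text, a domain of values for each variable, and a
deterministic small-step semantics, modelled as a partial function `step` on
configurations (`none` meaning that the configuration admits no further step).
Worlds of the Kripke interpretation are the finite traces from valid initial
stores; by determinism such a trace is represented by its initial store
together with its length.
-/

attribute [local instance] Classical.propDecidable

namespace SecModal

section Aux

variable {Prog Var Val : Type}

lemma destutter'_append_single {α : Type} (R : α → α → Prop) [DecidableRel R]
    (l : List α) (a x : α) :
    List.destutter' R a (l ++ [x]) = List.destutter' R a l ∨
    List.destutter' R a (l ++ [x]) = List.destutter' R a l ++ [x] := by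
  induction l generalizing a with
  | nil =>
    by_cases h : R a x
    · right; simp [List.destutter'_singleton, h]
    · left; simp [List.destutter'_singleton, h]
  | cons b t ih =>
    by_cases h : R a b
    · rcases ih b with h' | h'
      · left; simp [List.destutter'_cons, h, h']
      · right; simp [List.destutter'_cons, h, h']
    · rcases ih a with h' | h'
      · left; simp [List.destutter'_cons, h, h']
      · right; simp [List.destutter'_cons, h, h']

lemma dest_append_single {α : Type} (l : List α) (x : α) :
    dest (l ++ [x]) = dest l ∨ dest (l ++ [x]) = dest l ++ [x] := by
  cases l with
  | nil => right; simp [dest]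
  | cons a t =>
    simpa [dest, List.destutter_cons'] using
      destutter'_append_single (α := α) (· ≠ ·) t a x

lemma pview_zero (P : Program Prog Var Val) (S : Set Var) (c : Config Prog Var Val) :
    P.pview S c 0 = [restrict S c.2] := by
  have h1 : List.range 1 = [0] := rfl
  simp [Program.pview, Program.configAt, Program.iter, dest, h1,
    List.destutter_singleton]

lemma pview_succ (P : Program Prog Var Val) (S : Set Var) (c : Config Prog Var Val) (n : ℕ) :
    P.pview S c (n + 1) = P.pview S c n ∨
    P.pview S c (n + 1) = P.pview S c n ++ [restrict S (P.configAt c (n + 1)).2] := by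
  unfold Program.pview
  rw [List.range_succ, List.map_append, List.map_singleton]
  exact dest_append_single _ _

lemma pview_prefix (P : Program Prog Var Val) (S : Set Var) (c : Config Prog Var Val)
    {k m : ℕ} (h : k ≤ m) : P.pview S c k <+: P.pview S c m := by
  induction m with
  | zero => rw [Nat.le_zero.mp h]
  | succ m ih =>
    rcases Nat.lt_or_ge k (m + 1) with hk | hk
    · have h1 : P.pview S c k <+: P.pview S c m := ih (Nat.lt_succ_iff.mp hk)
      rcases pview_succ P S c m with h2 | h2
      · rwa [h2]
      · rw [h2]; exact h1.trans (List.prefix_append _ _)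
    · rw [Nat.le_antisymm h hk]

lemma pview_length_pos (P : Program Prog Var Val) (S : Set Var) (c : Config Prog Var Val)
    (n : ℕ) : 1 ≤ (P.pview S c n).length := by
  have h := (pview_prefix P S c (Nat.zero_le n)).length_le
  rwa [pview_zero] at h

lemma pview_ivt (P : Program Prog Var Val) (S : Set Var) (c : Config Prog Var Val)
    {m t : ℕ} (h1 : 1 ≤ t) (h2 : t ≤ (P.pview S c m).length) :
    ∃ k, k ≤ m ∧ (P.pview S c k).length = t := by
  induction m with
  | zero =>
    refine ⟨0, le_refl _, ?_⟩
    rw [pview_zero] at h2 ⊢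
    simp at h2 ⊢
    omega
  | succ m ih =>
    by_cases h : t ≤ (P.pview S c m).length
    · obtain ⟨k, hk, ht⟩ := ih h
      exact ⟨k, hk.trans (Nat.le_succ m), ht⟩
    · push_neg at h
      rcases pview_succ P S c m with hs | hs
      · rw [hs] at h2; exact absurd h2 (by omega)
      · refine ⟨m + 1, le_refl _, ?_⟩
        rw [hs] at h2 ⊢
        rw [List.length_append, List.length_singleton] at h2 ⊢
        omega

lemma iter_isSome_mono (P : Program Prog Var Val) {c : Config Prog Var Val}
    {k m : ℕ} (h : k ≤ m) (hm : (P.iter m c).isSome = true) :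
    (P.iter k c).isSome = true := by
  induction m with
  | zero => rwa [Nat.le_zero.mp h]
  | succ m ih =>
    rcases Nat.lt_or_ge k (m + 1) with hk | hk
    · apply ih (Nat.lt_succ_iff.mp hk)
      unfold Program.iter at hm
      cases hmm : P.iter m c with
      | none => rw [hmm] at hm; simp at hm
      | some c' => simp
    · rwa [Nat.le_antisymm h hk]

lemma configAt_eq (P : Program Prog Var Val) {c c' : Config Prog Var Val} {n : ℕ}
    (h : P.iter n c = some c') : P.configAt c n = c' := by
  simp [Program.configAt, h]

lemma halted_halts {P : Program Prog Var Val} (w : P.World) (h : P.halted w) :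
    P.halts (P.text, w.init) := by
  obtain ⟨c', hc'⟩ := Option.isSome_iff_exists.mp w.defined
  refine ⟨w.len, c', hc', ?_⟩
  rwa [Program.halted, configAt_eq P hc'] at h

lemma restrict_eq_iff {S : Set Var} {σ1 σ2 : Store Var Val} :
    restrict S σ1 = restrict S σ2 ↔ ∀ v ∈ S, σ1 v = σ2 v := by
  constructor
  · intro h v hv
    have := congrFun h v
    simp only [restrict, if_pos hv] at this
    exact Option.some_injective _ this
  · intro h
    funext v
    simp only [restrict]
    split_ifs with hv
    · exact congrArg some (h v hv)
    · rfl

/-- Key helper for the right-to-left direction. -/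
lemma half_mview {Prog Var Val Agent : Type} (P : Program Prog Var Val)
    (Wr : Agent → Set Var)
    (hK : ∀ (A : Agent) (w : P.World) (φ : P.World → Prop), TS P.Ttime φ →
        (dia P.Ttime P.halted w ∧ dia P.Ttime (box (P.WPrel (Wr A)) φ) w) →
        box (P.WCrel (Wr A))
          (fun u => box P.Ttime (fun x => ¬ P.halted x) u ∨ dia P.Ttime φ u) w)
    (A : Agent) (σ1 σ2 : Store Var Val) (hv1 : P.ValidStore σ1) (hv2 : P.ValidStore σ2)
    (hagree : ∀ v, v ∉ Wr A → σ1 v = σ2 v)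
    (h1 : P.halts (P.text, σ1)) (h2 : P.halts (P.text, σ2)) :
    ∀ n, (P.iter n (P.text, σ1)).isSome = true →
      ∃ m, (P.iter m (P.text, σ2)).isSome = true ∧
        P.pview (Wr A)ᶜ (P.text, σ1) n <+: P.pview (Wr A)ᶜ (P.text, σ2) m := by
  intro n hn
  set S := (Wr A)ᶜ with hS
  -- the temporally sound formula
  set φ : P.World → Prop :=
    fun x => P.pview S (P.text, σ1) n <+: P.pview S (P.text, x.init) x.len with hφ
  have hTS : TS P.Ttime φ := by
    intro w'
    constructor
    · intro hw' x hx
      obtain ⟨hinit, hlen⟩ := hx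
      refine hw'.trans ?_
      rw [hinit]
      exact pview_prefix P S _ hlen
    · intro hb
      exact hb w' ⟨rfl, le_refl _⟩
  -- the initial world for σ1
  have hdef0 : ∀ σ : Store Var Val, (P.iter 0 (P.text, σ)).isSome = true := by
    intro σ; simp [Program.iter]
  set w : P.World := ⟨σ1, hv1, 0, hdef0 σ1⟩ with hw
  -- hypotheses of hK
  obtain ⟨N1, c1, hN1, hs1⟩ := h1
  have hdia1 : dia P.Ttime P.halted w := by
    refine ⟨⟨σ1, hv1, N1, by rw [hN1]; rfl⟩, ⟨rfl, Nat.zero_le _⟩, ?_⟩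
    show P.step (P.configAt (P.text, σ1) N1) = none
    rwa [configAt_eq P hN1]
  have hdia2 : dia P.Ttime (box (P.WPrel (Wr A)) φ) w := by
    refine ⟨⟨σ1, hv1, n, hn⟩, ⟨rfl, Nat.zero_le _⟩, ?_⟩
    intro x hx
    have hx' : P.pview S (P.text, σ1) n = P.pview S (P.text, x.init) x.len := hx
    show P.pview S (P.text, σ1) n <+: P.pview S (P.text, x.init) x.len
    rw [← hx']
  have hbox := hK A w φ hTS ⟨hdia1, hdia2⟩
  -- the initial world for σ2
  set u : P.World := ⟨σ2, hv2, 0, hdef0 σ2⟩ with hu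
  have hWC : P.WCrel (Wr A) w u := by
    refine ⟨rfl, rfl, ?_⟩
    show P.pview S (P.text, σ1) 0 = P.pview S (P.text, σ2) 0
    rw [pview_zero, pview_zero]
    congr 1
    exact restrict_eq_iff.mpr (fun v hv => hagree v hv)
  rcases hbox u hWC with hnh | hdia
  · -- contradiction with h2
    exfalso
    obtain ⟨N2, c2, hN2, hs2⟩ := h2
    refine hnh ⟨σ2, hv2, N2, by rw [hN2]; rfl⟩ ⟨rfl, Nat.zero_le _⟩ ?_
    show P.step (P.configAt (P.text, σ2) N2) = none
    rwa [configAt_eq P hN2]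
  · obtain ⟨x, ⟨hinit, _⟩, hx⟩ := hdia
    refine ⟨x.len, ?_, ?_⟩
    · have := x.defined
      rwa [← hinit] at this
    · have : P.pview S (P.text, σ1) n <+: P.pview S (P.text, x.init) x.len := hx
      rwa [← hinit] at this

end Aux

end SecModal

namespace SecModal

/-- Termination-insensitive trace-based integrity (Def. inte2). -/
def TITraceInt {Prog Var Val Agent : Type} (P : Program Prog Var Val)
    (Wr : Agent → Set Var) : Prop :=
  ∀ (A : Agent) (σ1 σ2 : Store Var Val),
    P.ValidStore σ1 → P.ValidStore σ2 → (∀ v, v ∉ Wr A → σ1 v = σ2 v) →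
    P.mviewEq (Wr A)ᶜ (P.text, σ1) (P.text, σ2) ∨
      P.diverges (P.text, σ1) ∨ P.diverges (P.text, σ2)

/-- `P` and `S` satisfy termination-insensitive trace-based integrity
iff the Kripke interpretation of `P` and `S` satisfies cause termination-insensitive
integrity: for all agents `A`, worlds `w`, and temporally sound `φ`,
`w ⊨ ◇↓ ∧ ◇[W^P_A]φ` implies `w ⊨ [W^C_A](□¬↓ ∨ ◇φ)`. -/
theorem stmt_10 {Prog Var Val Agent : Type} (P : Program Prog Var Val)
    (Wr : Agent → Set Var) :
    TITraceInt P Wr ↔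
      (∀ (A : Agent) (w : P.World) (φ : P.World → Prop), TS P.Ttime φ →
        (dia P.Ttime P.halted w ∧ dia P.Ttime (box (P.WPrel (Wr A)) φ) w) →
        box (P.WCrel (Wr A))
          (fun u => box P.Ttime (fun x => ¬ P.halted x) u ∨ dia P.Ttime φ u) w) := by
  constructor
  · -- forward direction
    rintro hTI A w φ _hTS ⟨⟨w1, hT1, hH1⟩, ⟨w2, hT2, hB2⟩⟩ u hWC
    obtain ⟨hwlen, hulen, hview⟩ := hWC
    set S := (Wr A)ᶜ with hS
    -- the initial stores agree outside Wr A
    have hagree : ∀ v, v ∉ Wr A → w.init v = u.init v := by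
      intro v hv
      have h0 : P.pview S (P.text, w.init) 0 = P.pview S (P.text, u.init) 0 := by
        have : P.pview S (P.text, w.init) w.len = P.pview S (P.text, u.init) u.len := hview
        rwa [hwlen, hulen] at this
      rw [pview_zero, pview_zero] at h0
      have := restrict_eq_iff.mp (List.singleton_injective h0)
      exact this v hv
    -- σ1 halts
    have hws : P.halts (P.text, w.init) := by
      have := halted_halts w1 hH1
      rwa [← hT1.1] at this
    rcases hTI A w.init u.init w.valid u.valid hagree with hmv | hd1 | hd2
    · -- construct the witness world for ◇φ at u
      right
      have hw2init : w2.init = w.init := hT2.1.symm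
      have hw2def : (P.iter w2.len (P.text, w.init)).isSome = true := by
        have := w2.defined; rwa [hw2init] at this
      obtain ⟨m, hm, hpre⟩ := hmv.1 w2.len hw2def
      -- find k ≤ m with the views of equal length
      have hlen1 : 1 ≤ (P.pview S (P.text, w.init) w2.len).length :=
        pview_length_pos P S _ _
      have hlen2 : (P.pview S (P.text, w.init) w2.len).length ≤
          (P.pview S (P.text, u.init) m).length := hpre.length_le
      obtain ⟨k, hkm, hklen⟩ := pview_ivt P S (P.text, u.init) hlen1 hlen2
      have hkdef : (P.iter k (P.text, u.init)).isSome = true :=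
        iter_isSome_mono P hkm hm
      set x : P.World := ⟨u.init, u.valid, k, hkdef⟩ with hx
      have hviews : P.pview S (P.text, u.init) k = P.pview S (P.text, w.init) w2.len := by
        have hp1 : P.pview S (P.text, u.init) k <+: P.pview S (P.text, u.init) m :=
          pview_prefix P S _ hkm
        have := List.prefix_of_prefix_length_le hp1 hpre hklen.le
        exact this.eq_of_length hklen
      refine ⟨x, ⟨rfl, by rw [hulen]; exact Nat.zero_le _⟩, ?_⟩
      apply hB2
      show P.pview S (P.text, w2.init) w2.len = P.pview S (P.text, x.init) x.len
      rw [hw2init]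
      exact hviews.symm
    · exact absurd hws hd1
    · -- u's trace diverges: no extension of u halts
      left
      intro x hTx hHx
      have := halted_halts x hHx
      rw [← hTx.1] at this
      exact hd2 this
  · -- backward direction
    intro hK A σ1 σ2 hv1 hv2 hagree
    by_cases hd1 : P.diverges (P.text, σ1)
    · exact Or.inr (Or.inl hd1)
    by_cases hd2 : P.diverges (P.text, σ2)
    · exact Or.inr (Or.inr hd2)
    have h1 : P.halts (P.text, σ1) := not_not.mp hd1
    have h2 : P.halts (P.text, σ2) := not_not.mp hd2
    left
    constructor
    · exact half_mview P Wr hK A σ1 σ2 hv1 hv2 hagree h1 h2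
    · exact half_mview P Wr hK A σ2 σ1 hv2 hv1
        (fun v hv => (hagree v hv).symm) h2 h1

end SecModal
end
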